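/- (Theorem 3, Case 1.) Let Ξ > 0, q_c > 0 and q_max > 0. Define F_EE(q) = ln(1 + qΞ) / ((q + q_c)·ln 2) and F̂_EE(q) = ((q + q_c)/(1 + qΞ))·Ξ − ln(1 + qΞ) for q ≥ 0. If F̂_EE(q_max) ≥ 0, then F_EE is monotonically increasing on [0, q_max]; in particular, F_EE(q) ≤ F_EE(q_max) for every q ∈ [0, q_max], so the transmit power spectral density q* = q_max maximizes the energy efficiency subject to 0 < q ≤ q_max. -/

import Mathlib

open Real

/-- Energy efficiency `F_EE(q) = ln(1 + qΞ) / ((q + q_c)·ln 2)`. -/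
noncomputable def FEE (Ξ q_c q : ℝ) : ℝ :=
  Real.log (1 + q * Ξ) / ((q + q_c) * Real.log 2)

/-- Auxiliary function `F̂_EE(q) = ((q + q_c)/(1 + qΞ))·Ξ − ln(1 + qΞ)`. -/
noncomputable def FhatEE (Ξ q_c q : ℝ) : ℝ :=
  (q + q_c) / (1 + q * Ξ) * Ξ - Real.log (1 + q * Ξ)

/-!
`F_EE′(q) = F̂_EE(q) / ((q + q_c)² ln 2)` and `F̂_EE′(q) = -Ξ²(q + q_c) / (1 + qΞ)² ≤ 0`.
So `F̂_EE` decreases on `[0, ∞)`; if it is nonnegative at `q_max`, it is nonnegative on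
`[0, q_max]`, where `F_EE` therefore has a nonnegative derivative and increases.
-/

lemma hasDerivAt_one_add_mul_const (Ξ q : ℝ) : HasDerivAt (fun x : ℝ => 1 + x * Ξ) Ξ q := by
  simpa using ((hasDerivAt_id q).mul_const Ξ).const_add 1

section

variable {Ξ q_c q : ℝ}

lemma hasDerivAt_FhatEE (hq : 0 < 1 + q * Ξ) :
    HasDerivAt (FhatEE Ξ q_c) (-(Ξ ^ 2 * (q + q_c)) / (1 + q * Ξ) ^ 2) q := by
  have hlin := hasDerivAt_one_add_mul_const Ξ q
  have hquot := ((hasDerivAt_id' q).add_const q_c).div hlin hq.ne'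
  refine ((hquot.mul_const Ξ).sub (hlin.log hq.ne')).congr_deriv ?_
  field_simp
  ring

lemma hasDerivAt_FEE (hq : 0 < 1 + q * Ξ) (hqc : q + q_c ≠ 0) :
    HasDerivAt (FEE Ξ q_c) (FhatEE Ξ q_c q / ((q + q_c) ^ 2 * Real.log 2)) q := by
  have hden : HasDerivAt (fun x : ℝ => (x + q_c) * Real.log 2) (Real.log 2) q := by
    simpa using ((hasDerivAt_id q).add_const q_c).mul_const (Real.log 2)
  have hlog2 : Real.log 2 ≠ 0 := (Real.log_pos one_lt_two).ne'
  refine (((hasDerivAt_one_add_mul_const Ξ q).log hq.ne').div hden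
    (mul_ne_zero hqc hlog2)).congr_deriv ?_
  unfold FhatEE
  field_simp

lemma FhatEE_antitoneOn (hΞ : 0 ≤ Ξ) (hqc : 0 ≤ q_c) :
    AntitoneOn (FhatEE Ξ q_c) (Set.Ici 0) := by
  have hderiv : ∀ q ∈ Set.Ici (0 : ℝ),
      HasDerivAt (FhatEE Ξ q_c) (-(Ξ ^ 2 * (q + q_c)) / (1 + q * Ξ) ^ 2) q :=
    fun q hq => hasDerivAt_FhatEE (by have : (0 : ℝ) ≤ q := hq; positivity)
  refine antitoneOn_of_hasDerivWithinAt_nonpos (convex_Ici 0)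
    (fun q hq => (hderiv q hq).continuousAt.continuousWithinAt)
    (fun q hq => (hderiv q (interior_subset hq)).hasDerivWithinAt) fun q hq => ?_
  have : (0 : ℝ) ≤ q := interior_subset (s := Set.Ici 0) hq
  exact div_nonpos_of_nonpos_of_nonneg (by simp only [neg_nonpos]; positivity) (by positivity)

lemma FEE_monotoneOn_Icc {b : ℝ} (hΞ : 0 ≤ Ξ) (hqc : 0 < q_c) (hb : 0 ≤ FhatEE Ξ q_c b) :
    MonotoneOn (FEE Ξ q_c) (Set.Icc 0 b) := by
  have hderiv : ∀ q ∈ Set.Icc (0 : ℝ) b,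
      HasDerivAt (FEE Ξ q_c) (FhatEE Ξ q_c q / ((q + q_c) ^ 2 * Real.log 2)) q :=
    fun q hq => hasDerivAt_FEE (by have := hq.1; positivity) (by linarith [hq.1])
  have hhat : ∀ q ∈ Set.Icc (0 : ℝ) b, 0 ≤ FhatEE Ξ q_c q := fun q hq =>
    hb.trans (FhatEE_antitoneOn hΞ hqc.le hq.1 (hq.1.trans hq.2) hq.2)
  exact monotoneOn_of_hasDerivWithinAt_nonneg (convex_Icc 0 b)
    (fun q hq => (hderiv q hq).continuousAt.continuousWithinAt)
    (fun q hq => (hderiv q (interior_subset hq)).hasDerivWithinAt)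
    fun q hq => div_nonneg (hhat q (interior_subset hq)) (by positivity)

end

theorem FEE_monotone_of_FhatEE_nonneg_general (Ξ q_c q_max : ℝ) (hΞ : 0 < Ξ) (hqc : 0 < q_c)
    (h : 0 ≤ FhatEE Ξ q_c q_max) :
    MonotoneOn (FEE Ξ q_c) (Set.Icc 0 q_max) ∧
      ∀ q ∈ Set.Icc (0 : ℝ) q_max, FEE Ξ q_c q ≤ FEE Ξ q_c q_max := by
  have hmono := FEE_monotoneOn_Icc hΞ.le hqc h
  exact ⟨hmono, fun q hq => hmono hq ⟨hq.1.trans hq.2, le_rfl⟩ hq.2⟩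

/-- Theorem 3, Case 1: if `F̂_EE(q_max) ≥ 0`, then the energy efficiency
`F_EE` is monotonically increasing on `[0, q_max]`; in particular `F_EE(q) ≤ F_EE(q_max)`
for every `q ∈ [0, q_max]`, so `q* = q_max` maximizes the energy efficiency subject to
`0 < q ≤ q_max`. -/
theorem FEE_monotone_of_FhatEE_nonneg (Ξ q_c q_max : ℝ) (hΞ : 0 < Ξ) (hqc : 0 < q_c)
    (hqm : 0 < q_max) (h : 0 ≤ FhatEE Ξ q_c q_max) :
    MonotoneOn (FEE Ξ q_c) (Set.Icc 0 q_max) ∧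
      ∀ q ∈ Set.Icc (0 : ℝ) q_max, FEE Ξ q_c q ≤ FEE Ξ q_c q_max :=
  FEE_monotone_of_FhatEE_nonneg_general Ξ q_c q_max hΞ hqc h
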